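/- Assume v_0 < ... < v_g satisfy the Bresinsky conditions, and set μ = Σ_{i=1}^g (n_i − 1)v_i − v_0 + 1. Then μ is the conductor of Γ (μ − 1 ∉ Γ and μ + k ∈ Γ for all k ∈ ℕ) and Γ is symmetric: for every integer z, z ∈ Γ if and only if μ − 1 − z ∉ Γ. -/
import Mathlib

/-- `e_i = gcd(v_0, …, v_i)`. -/
def eseq (v : ℕ → ℕ) : ℕ → ℕ
  | 0 => v 0
  | i + 1 => Nat.gcd (eseq v i) (v (i + 1))

/-- `n_0 = 1`, `n_i = e_{i-1}/e_i`. -/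
def nseq (v : ℕ → ℕ) : ℕ → ℕ
  | 0 => 1
  | i + 1 => eseq v i / eseq v (i + 1)

/-- The numerical semigroup generated by `v_0, …, v_g`, regarded inside `ℤ`. -/
def semigroupGenZ (g : ℕ) (v : ℕ → ℕ) : Set ℤ :=
  {z | ∃ c : ℕ → ℕ, z = ∑ i ∈ Finset.range (g + 1), (c i : ℤ) * (v i : ℤ)}

namespace BresAux

variable {v : ℕ → ℕ}

lemma eseq_pos (hpos : 0 < v 0) : ∀ i, 0 < eseq v i
  | 0 => hpos
  | i + 1 => Nat.gcd_pos_of_pos_left _ (eseq_pos hpos i)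

lemma eseq_succ_dvd (i : ℕ) : eseq v (i+1) ∣ eseq v i := Nat.gcd_dvd_left _ _

lemma eseq_dvd_eseq {i j : ℕ} (h : i ≤ j) : eseq v j ∣ eseq v i := by
  induction j with
  | zero => simp [Nat.le_zero.mp h]
  | succ j ih =>
    rcases Nat.lt_or_ge i (j+1) with h' | h'
    · exact (eseq_succ_dvd j).trans (ih (by omega))
    · have : i = j + 1 := by omega
      simp [this]

lemma eseq_dvd_v {i j : ℕ} (h : j ≤ i) : eseq v i ∣ v j := by
  have h1 : eseq v j ∣ v j := by
    cases j with
    | zero => exact dvd_refl _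
    | succ j => exact Nat.gcd_dvd_right _ _
  exact (eseq_dvd_eseq h).trans h1

lemma nseq_mul_eseq (i : ℕ) : nseq v (i+1) * eseq v (i+1) = eseq v i :=
  Nat.div_mul_cancel (eseq_succ_dvd i)

/-- sum split -/
lemma sum_split (f : ℕ → ℤ) (n : ℕ) :
    ∑ j ∈ Finset.range (n+1), f j = f 0 + ∑ j ∈ Finset.Icc 1 n, f j := by
  induction n with
  | zero => simp
  | succ n ih => rw [Finset.sum_range_succ, ih, Finset.sum_Icc_succ_top (by omega)]; ring

/-- representation predicate -/
def RepEq (v : ℕ → ℕ) (i : ℕ) (z a : ℤ) (c : ℕ → ℕ) : Prop :=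
  z = a * (v 0 : ℤ) + ∑ j ∈ Finset.Icc 1 i, (c j : ℤ) * (v j : ℤ)

def Bounds (v : ℕ → ℕ) (i : ℕ) (c : ℕ → ℕ) : Prop :=
  ∀ j, 1 ≤ j → j ≤ i → c j < nseq v j

lemma mem_nonneg {i : ℕ} {z : ℤ} (hz : z ∈ semigroupGenZ i v) : 0 ≤ z := by
  obtain ⟨c, rfl⟩ := hz
  exact Finset.sum_nonneg fun j _ => mul_nonneg (Int.natCast_nonneg _) (Int.natCast_nonneg _)

lemma add_mem {i : ℕ} {z w : ℤ} (hz : z ∈ semigroupGenZ i v) (hw : w ∈ semigroupGenZ i v) :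
    z + w ∈ semigroupGenZ i v := by
  obtain ⟨c, rfl⟩ := hz; obtain ⟨d, rfl⟩ := hw
  refine ⟨fun j => c j + d j, ?_⟩
  rw [← Finset.sum_add_distrib]
  refine Finset.sum_congr rfl fun j _ => by push_cast; ring

lemma nsmul_mem {i : ℕ} {z : ℤ} (k : ℕ) (hz : z ∈ semigroupGenZ i v) :
    (k : ℤ) * z ∈ semigroupGenZ i v := by
  obtain ⟨c, rfl⟩ := hz
  refine ⟨fun j => k * c j, ?_⟩
  rw [Finset.mul_sum]
  refine Finset.sum_congr rfl fun j _ => by push_cast; ring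

lemma gen_mem {i j : ℕ} (h : j ≤ i) (k : ℕ) : (k : ℤ) * (v j : ℤ) ∈ semigroupGenZ i v := by
  refine ⟨fun t => if t = j then k else 0, ?_⟩
  have : ∀ t ∈ Finset.range (i+1), ((if t = j then k else 0 : ℕ) : ℤ) * (v t : ℤ)
      = if t = j then (k:ℤ) * (v t : ℤ) else 0 := by
    intro t _; split <;> simp
  rw [Finset.sum_congr rfl this, Finset.sum_ite_eq' (Finset.range (i+1)) j]
  simp [Finset.mem_range, Nat.lt_succ_of_le h]

lemma mono_mem {i : ℕ} {z : ℤ} (hz : z ∈ semigroupGenZ i v) : z ∈ semigroupGenZ (i+1) v := by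
  obtain ⟨c, rfl⟩ := hz
  refine ⟨fun t => if t = i+1 then 0 else c t, ?_⟩
  conv_rhs => rw [Finset.sum_range_succ]
  have : ∀ t ∈ Finset.range (i+1),
      (((if t = i+1 then 0 else c t : ℕ)) : ℤ) * (v t : ℤ) = (c t : ℤ) * (v t : ℤ) := by
    intro t ht
    have : t ≠ i + 1 := by have := Finset.mem_range.mp ht; omega
    simp [this]
  rw [Finset.sum_congr rfl this]
  simp

lemma dvd_of_mem {i : ℕ} {z : ℤ} (hz : z ∈ semigroupGenZ i v) : (eseq v i : ℤ) ∣ z := by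
  obtain ⟨c, rfl⟩ := hz
  refine Finset.dvd_sum fun j hj => Dvd.dvd.mul_left ?_ _
  exact Int.natCast_dvd_natCast.mpr (eseq_dvd_v (Nat.lt_succ_iff.mp (Finset.mem_range.mp hj)))



lemma eseq_succ (v : ℕ → ℕ) (i : ℕ) : eseq v (i+1) = Nat.gcd (eseq v i) (v (i+1)) := rfl
lemma nseq_succ (v : ℕ → ℕ) (i : ℕ) : nseq v (i+1) = eseq v i / eseq v (i+1) := rfl

lemma mem_of_rep {i : ℕ} {z a : ℤ} {c : ℕ → ℕ} (h : RepEq v i z a c) (ha : 0 ≤ a) :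
    z ∈ semigroupGenZ i v := by
  refine ⟨fun j => if j = 0 then a.toNat else c j, ?_⟩
  rw [sum_split]
  have e0 : ((if (0:ℕ) = 0 then a.toNat else c 0 : ℕ) : ℤ) = a := by
    rw [if_pos rfl, Int.toNat_of_nonneg ha]
  rw [e0, h]
  congr 1
  refine Finset.sum_congr rfl fun j hj => ?_
  have : j ≠ 0 := by have := (Finset.mem_Icc.mp hj).1; omega
  simp [this]

lemma dvd_of_rep {i : ℕ} {z a : ℤ} {c : ℕ → ℕ} (h : RepEq v i z a c) :
    (eseq v i : ℤ) ∣ z := by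
  rw [h]
  refine dvd_add (Dvd.dvd.mul_left ?_ _) (Finset.dvd_sum fun j hj => Dvd.dvd.mul_left ?_ _)
  · exact Int.natCast_dvd_natCast.mpr (eseq_dvd_v (Nat.zero_le _))
  · exact Int.natCast_dvd_natCast.mpr (eseq_dvd_v (Finset.mem_Icc.mp hj).2)

lemma exists_r (m u : ℕ) (hm : 2 ≤ m) (hco : Nat.Coprime u m) (w : ℤ) :
    ∃ r : ℕ, r < m ∧ (m : ℤ) ∣ w - (r : ℤ) * u := by
  haveI : NeZero m := ⟨by omega⟩
  set x : ZMod m := (w : ZMod m) * ((ZMod.unitOfCoprime u hco)⁻¹ : (ZMod m)ˣ) with hx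
  refine ⟨x.val, ZMod.val_lt x, ?_⟩
  rw [← ZMod.intCast_zmod_eq_zero_iff_dvd]
  push_cast
  rw [ZMod.natCast_val, ZMod.cast_id, hx]
  have hu : ((ZMod.unitOfCoprime u hco : (ZMod m)ˣ) : ZMod m) = (u : ZMod m) :=
    ZMod.coe_unitOfCoprime u hco
  rw [← hu]
  rw [mul_assoc, Units.inv_mul, mul_one]
  ring

lemma r_eq {m u e' : ℕ} (he' : 0 < e') (hco : Nat.Coprime m u) {r r' : ℕ}
    (hr : r < m) (hr' : r' < m)
    (hdvd : ((m : ℤ) * e') ∣ ((r : ℤ) - r') * ((u : ℤ) * e')) : r = r' := by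
  have h1 : (m : ℤ) ∣ ((r : ℤ) - r') * u := by
    obtain ⟨t, ht⟩ := hdvd
    refine ⟨t, ?_⟩
    have he'0 : (e' : ℤ) ≠ 0 := by exact_mod_cast he'.ne'
    apply mul_right_cancel₀ he'0
    linear_combination ht
  have h2 : (m : ℤ) ∣ ((r : ℤ) - r') := hco.isCoprime.dvd_of_dvd_mul_right h1
  have h3 : m ∣ ((r : ℤ) - r').natAbs := by
    have := Int.natAbs_dvd_natAbs.mpr h2
    simpa using this
  have h4 : ((r : ℤ) - r').natAbs < m := by omega
  have h5 : ((r : ℤ) - r').natAbs = 0 := by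
    by_contra hne
    exact absurd (Nat.le_of_dvd (by omega) h3) (by omega)
  omega

def Fr (v : ℕ → ℕ) (i : ℕ) : ℤ :=
  (∑ j ∈ Finset.Icc 1 i, ((nseq v j : ℤ) - 1) * (v j : ℤ)) - (v 0 : ℤ)

section Main

variable {g : ℕ} (hpos : 0 < v 0)
  (hmono : ∀ i j, i < j → j ≤ g → v i < v j)
  (hbre : ∀ i, 1 ≤ i → i ≤ g → 2 ≤ nseq v i ∧ nseq v (i - 1) * v (i - 1) < v i)

include hpos hmono hbre

lemma sum_lt : ∀ k, k + 1 ≤ g →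
    (∑ j ∈ Finset.Icc 1 k, ((nseq v j : ℤ) - 1) * (v j : ℤ)) < (v (k+1) : ℤ) := by
  intro k
  induction k with
  | zero =>
    intro h
    have : v 0 < v 1 := hmono 0 1 (by omega) h
    simp
    exact_mod_cast by omega
  | succ k ih =>
    intro h
    have h1 := ih (by omega)
    have h2 := (hbre (k+2) (by omega) (by omega)).2
    have h2' : (nseq v (k+1) : ℤ) * (v (k+1) : ℤ) < (v (k+2) : ℤ) := by
      simpa using (by exact_mod_cast h2 : ((nseq v (k+2-1) * v (k+2-1) : ℕ) : ℤ) < (v (k+2) : ℤ))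
    rw [Finset.sum_Icc_succ_top (by omega)]
    have : (k+1) + 1 = k + 2 := by omega
    rw [this] at *
    nlinarith [h1, h2']

end Main



def Eprop (v : ℕ → ℕ) (i : ℕ) : Prop :=
  ∀ z : ℤ, (eseq v i : ℤ) ∣ z → ∃ (a : ℤ) (c : ℕ → ℕ), RepEq v i z a c ∧ Bounds v i c

def Pprop (v : ℕ → ℕ) (i : ℕ) : Prop :=
  ∀ (z a : ℤ) (c : ℕ → ℕ), RepEq v i z a c → Bounds v i c →
    (z ∈ semigroupGenZ i v ↔ 0 ≤ a)

lemma sym_of {i : ℕ} (hE : Eprop v i) (hP : Pprop v i)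
    (hn : ∀ j, 1 ≤ j → j ≤ i → 1 ≤ nseq v j) :
    ∀ z : ℤ, (eseq v i : ℤ) ∣ z →
      (z ∈ semigroupGenZ i v ↔ Fr v i - z ∉ semigroupGenZ i v) := by
  intro z hz
  obtain ⟨a, c, hrep, hb⟩ := hE z hz
  set c' : ℕ → ℕ := fun j => nseq v j - 1 - c j with hc'
  have hrep' : RepEq v i (Fr v i - z) (-1 - a) c' := by
    unfold RepEq
    have hcast : ∀ j ∈ Finset.Icc 1 i,
        ((c' j : ℤ)) * (v j : ℤ)
          = (((nseq v j : ℤ) - 1) * (v j : ℤ) - (c j : ℤ) * (v j : ℤ)) := by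
      intro j hj
      obtain ⟨h1, h2⟩ := Finset.mem_Icc.mp hj
      have hb1 := hb j h1 h2
      have hn1 := hn j h1 h2
      have : ((c' j : ℕ) : ℤ) = (nseq v j : ℤ) - 1 - (c j : ℤ) := by
        simp only [hc']; omega
      rw [this]; ring
    rw [Finset.sum_congr rfl hcast, Finset.sum_sub_distrib, Fr, hrep]
    ring
  have hb' : Bounds v i c' := by
    intro j h1 h2
    have := hn j h1 h2
    have := hb j h1 h2
    simp only [hc']
    omega
  rw [hP z a c hrep hb, hP _ _ _ hrep' hb']
  omega

lemma master {g : ℕ} (hpos : 0 < v 0)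
    (hmono : ∀ i j, i < j → j ≤ g → v i < v j)
    (hbre : ∀ i, 1 ≤ i → i ≤ g → 2 ≤ nseq v i ∧ nseq v (i - 1) * v (i - 1) < v i) :
    ∀ i, i ≤ g → Eprop v i ∧ Pprop v i := by
  intro i
  induction i with
  | zero =>
    intro _
    constructor
    · intro z hz
      obtain ⟨w, rfl⟩ := hz
      refine ⟨w, fun _ => 0, ?_, ?_⟩
      · unfold RepEq
        rw [Finset.Icc_eq_empty (by omega), Finset.sum_empty]
        show (eseq v 0 : ℤ) * w = w * (v 0 : ℤ) + 0
        rw [show eseq v 0 = v 0 from rfl]; ring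
      · intro j h1 h2; omega
    · intro z a c hrep hb
      have hz : z = a * (v 0 : ℤ) := by
        unfold RepEq at hrep; simpa using hrep
      constructor
      · rintro ⟨d, hd⟩
        rw [Finset.sum_range_one] at hd
        have hv : (0:ℤ) < (v 0 : ℤ) := by exact_mod_cast hpos
        have : a = (d 0 : ℤ) := by
          apply mul_right_cancel₀ hv.ne'
          rw [← hz, hd]
        rw [this]
        exact Int.natCast_nonneg _
      · intro ha
        exact mem_of_rep hrep ha
  | succ i ih =>
    intro hig
    obtain ⟨hE, hP⟩ := ih (by omega)
    have he'pos : 0 < eseq v (i+1) := eseq_pos hpos (i+1)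
    have hme : nseq v (i+1) * eseq v (i+1) = eseq v i := nseq_mul_eseq i
    have hm2 : 2 ≤ nseq v (i+1) := (hbre (i+1) (by omega) hig).1
    have hu : eseq v (i+1) ∣ v (i+1) := by
      rw [eseq_succ]; exact Nat.gcd_dvd_right _ _
    have hue : v (i+1) / eseq v (i+1) * eseq v (i+1) = v (i+1) := Nat.div_mul_cancel hu
    set m := nseq v (i+1) with hmdef
    set u := v (i+1) / eseq v (i+1) with hudef
    have hco : Nat.Coprime m u := by
      rw [hmdef, hudef, nseq_succ, eseq_succ]
      exact Nat.coprime_div_gcd_div_gcd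
        (Nat.gcd_pos_of_pos_left _ (eseq_pos hpos i))
    have hn1 : ∀ j, 1 ≤ j → j ≤ i → 1 ≤ nseq v j :=
      fun j h1 h2 => le_trans (by omega) (hbre j h1 (by omega)).1
    have hsym := sym_of hE hP hn1
    -- m * v (i+1) ∈ Γ_i
    have hdvd_mv : (eseq v i : ℤ) ∣ (m : ℤ) * (v (i+1) : ℤ) := by
      refine ⟨(u : ℤ), ?_⟩
      push_cast [← hme, ← hue]
      ring
    have hFlt : Fr v i < (m : ℤ) * (v (i+1) : ℤ) := by
      have h1 := sum_lt hpos hmono hbre i hig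
      have h2 : (v (i+1) : ℤ) ≤ (m : ℤ) * (v (i+1) : ℤ) := by
        have : (1 : ℤ) ≤ (m : ℤ) := by exact_mod_cast (by omega : 1 ≤ m)
        nlinarith [Int.natCast_nonneg (v (i+1))]
      have h3 : (0:ℤ) ≤ (v 0 : ℤ) := Int.natCast_nonneg _
      unfold Fr
      linarith
    have hmv : ((m : ℤ) * (v (i+1) : ℤ)) ∈ semigroupGenZ i v := by
      rw [hsym _ hdvd_mv]
      intro hc
      have := mem_nonneg hc
      linarith
    constructor
    · -- existence at i+1
      intro z hz
      obtain ⟨w, hw⟩ := hz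
      obtain ⟨r, hrm, hrdvd⟩ := exists_r m u hm2 hco.symm w
      have hzr : (eseq v i : ℤ) ∣ z - (r : ℤ) * (v (i+1) : ℤ) := by
        obtain ⟨t, ht⟩ := hrdvd
        refine ⟨t, ?_⟩
        rw [hw]
        push_cast [← hme, ← hue]
        linear_combination (eseq v (i+1) : ℤ) * ht
      obtain ⟨a, c, hrep, hb⟩ := hE _ hzr
      refine ⟨a, fun j => if j = i+1 then r else c j, ?_, ?_⟩
      · unfold RepEq
        rw [Finset.sum_Icc_succ_top (by omega : 1 ≤ i + 1)]
        have hcg : ∀ j ∈ Finset.Icc 1 i,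
            (((if j = i+1 then r else c j : ℕ)) : ℤ) * (v j : ℤ)
              = (c j : ℤ) * (v j : ℤ) := by
          intro j hj
          have : j ≠ i + 1 := by have := (Finset.mem_Icc.mp hj).2; omega
          simp [this]
        rw [Finset.sum_congr rfl hcg]
        have hite : ((fun j => if j = i + 1 then r else c j) (i+1)) = r := by simp
        rw [hite]
        unfold RepEq at hrep
        linarith [hrep]
      · intro j h1 h2
        by_cases hji : j = i + 1
        · simpa [hji] using hrm
        · have := hb j h1 (by omega)
          simpa [hji] using this
    · -- membership criterion at i+1
      intro z a c hrep hb
      have hrep1 : RepEq v i (z - (c (i+1) : ℤ) * (v (i+1) : ℤ)) a c := by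
        unfold RepEq at hrep ⊢
        rw [Finset.sum_Icc_succ_top (by omega : 1 ≤ i + 1)] at hrep
        linarith [hrep]
      have hb1 : Bounds v i c := fun j h1 h2 => hb j h1 (by omega)
      have hdz1 : (eseq v i : ℤ) ∣ z - (c (i+1) : ℤ) * (v (i+1) : ℤ) :=
        dvd_of_rep hrep1
      constructor
      · intro hzmem
        obtain ⟨d, hd⟩ := hzmem
        rw [Finset.sum_range_succ] at hd
        set y : ℤ := ∑ j ∈ Finset.range (i+1), (d j : ℤ) * (v j : ℤ) with hy
        have hymem : y ∈ semigroupGenZ i v := ⟨d, rfl⟩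
        set b := d (i+1) with hbdef
        have hbm : m * (b / m) + b % m = b := Nat.div_add_mod b m
        have hbmz : (m : ℤ) * ((b / m : ℕ) : ℤ) + ((b % m : ℕ) : ℤ) = (b : ℤ) := by
          exact_mod_cast hbm
        have hz2 : z = (y + ((b / m : ℕ) : ℤ) * ((m : ℤ) * (v (i+1) : ℤ)))
            + ((b % m : ℕ) : ℤ) * (v (i+1) : ℤ) := by
          rw [hd]
          linear_combination (-(v (i+1) : ℤ)) * hbmz
        have hy'mem : y + ((b / m : ℕ) : ℤ) * ((m : ℤ) * (v (i+1) : ℤ))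
            ∈ semigroupGenZ i v := add_mem hymem (nsmul_mem _ hmv)
        have hr1 : (eseq v i : ℤ) ∣ z - ((b % m : ℕ) : ℤ) * (v (i+1) : ℤ) := by
          have hdd := dvd_of_mem hy'mem
          have heq : z - ((b % m : ℕ) : ℤ) * (v (i+1) : ℤ)
              = y + ((b / m : ℕ) : ℤ) * ((m : ℤ) * (v (i+1) : ℤ)) := by
            rw [hz2]; ring
          rw [heq]; exact hdd
        have hreq : b % m = c (i+1) := by
          refine r_eq he'pos hco (Nat.mod_lt _ (by omega)) (hb (i+1) (by omega) (le_refl _)) ?_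
          have : ((m:ℤ) * (eseq v (i+1) : ℤ)) = (eseq v i : ℤ) := by exact_mod_cast hme
          rw [this]
          have hv' : ((u:ℤ) * (eseq v (i+1) : ℤ)) = (v (i+1) : ℤ) := by exact_mod_cast hue
          rw [hv']
          have := dvd_sub hr1 hdz1
          have heq : z - ((b % m : ℕ) : ℤ) * (v (i+1) : ℤ)
              - (z - (c (i+1) : ℤ) * (v (i+1) : ℤ))
              = ((c (i+1) : ℤ) - ((b % m : ℕ) : ℤ)) * (v (i+1) : ℤ) := by ring
          rw [heq] at this
          have heq2 : (((b % m : ℕ) : ℤ) - (c (i+1) : ℤ)) * (v (i+1) : ℤ)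
              = -(((c (i+1) : ℤ) - ((b % m : ℕ) : ℤ)) * (v (i+1) : ℤ)) := by ring
          rw [heq2]
          exact dvd_neg.mpr this
        have hfin : z - (c (i+1) : ℤ) * (v (i+1) : ℤ) ∈ semigroupGenZ i v := by
          have : z - (c (i+1) : ℤ) * (v (i+1) : ℤ)
              = y + ((b / m : ℕ) : ℤ) * ((m : ℤ) * (v (i+1) : ℤ)) := by
            rw [hz2, ← hreq]
            ring
          rw [this]
          exact hy'mem
        exact (hP _ a c hrep1 hb1).mp hfin
      · intro ha
        have h1 : z - (c (i+1) : ℤ) * (v (i+1) : ℤ) ∈ semigroupGenZ i v :=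
          (hP _ a c hrep1 hb1).mpr ha
        have h2 := add_mem (mono_mem h1) (gen_mem (le_refl (i+1)) (c (i+1)))
        simpa using h2

end BresAux

/-- For `v_0 < ⋯ < v_g` positive with `gcd = 1` satisfying the Bresinsky
conditions, `μ = Σ_{i=1}^g (n_i − 1)v_i − v_0 + 1` is the conductor of `Γ`
(`μ − 1 ∉ Γ` and `μ + k ∈ Γ` for all `k ∈ ℕ`) and `Γ` is symmetric:
`z ∈ Γ ↔ μ − 1 − z ∉ Γ` for every integer `z`. -/
theorem conductor_and_symmetric (g : ℕ) (v : ℕ → ℕ) (hpos : 0 < v 0)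
    (hmono : ∀ i j, i < j → j ≤ g → v i < v j) (hgcd : eseq v g = 1)
    (hbre : ∀ i, 1 ≤ i → i ≤ g → 2 ≤ nseq v i ∧ nseq v (i - 1) * v (i - 1) < v i) :
    (∑ i ∈ Finset.Icc 1 g, ((nseq v i : ℤ) - 1) * (v i : ℤ)) - (v 0 : ℤ) + 1 - 1
        ∉ semigroupGenZ g v ∧
      (∀ k : ℕ,
        (∑ i ∈ Finset.Icc 1 g, ((nseq v i : ℤ) - 1) * (v i : ℤ)) - (v 0 : ℤ) + 1 + k
          ∈ semigroupGenZ g v) ∧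
      ∀ z : ℤ, z ∈ semigroupGenZ g v ↔
        (∑ i ∈ Finset.Icc 1 g, ((nseq v i : ℤ) - 1) * (v i : ℤ)) - (v 0 : ℤ) + 1 - 1 - z
          ∉ semigroupGenZ g v := by
  obtain ⟨hE, hP⟩ := BresAux.master hpos hmono hbre g (le_refl g)
  have hn : ∀ j, 1 ≤ j → j ≤ g → 1 ≤ nseq v j :=
    fun j h1 h2 => le_trans (by omega) (hbre j h1 h2).1
  have hsym := BresAux.sym_of hE hP hn
  have hdvd : ∀ z : ℤ, (eseq v g : ℤ) ∣ z := by
    intro z; rw [hgcd]; exact one_dvd z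
  set S := ∑ i ∈ Finset.Icc 1 g, ((nseq v i : ℤ) - 1) * (v i : ℤ) with hS
  have hFr : BresAux.Fr v g = S - (v 0 : ℤ) := rfl
  refine ⟨?_, ?_, ?_⟩
  · have h1 : S - (v 0 : ℤ) + 1 - 1 = BresAux.Fr v g := by rw [hFr]; ring
    rw [h1]
    intro h
    have h0 : (0 : ℤ) ∈ semigroupGenZ g v := ⟨fun _ => 0, by simp⟩
    have h2 := (hsym _ (hdvd _)).mp h
    apply h2
    rw [sub_self]
    exact h0
  · intro k
    refine (hsym _ (hdvd _)).mpr ?_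
    intro hc
    have hnn := BresAux.mem_nonneg hc
    have h3 : BresAux.Fr v g - (S - (v 0 : ℤ) + 1 + (k : ℤ)) = -1 - (k : ℤ) := by
      rw [hFr]; ring
    rw [h3] at hnn
    have h4 : (0 : ℤ) ≤ (k : ℤ) := Int.natCast_nonneg k
    linarith
  · intro z
    have h5 := hsym z (hdvd z)
    have h1 : S - (v 0 : ℤ) + 1 - 1 - z = BresAux.Fr v g - z := by rw [hFr]; ring
    rw [h1]
    exact h5
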